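/- Let H be a hypergraph with vertices v_1,…,v_n and hyperedges e_1,…,e_m, with no isolated vertices, and let σ ∈ 𝔦_m ⊗ 𝔦_n be its idem-Clifford transversal representation. For every k ≥ 1 and every I ⊆ {1,…,n}: if the coefficient of the blade ε_{{1,…,m}} ⊗ x_I in the canonical expansion of σ^k is nonzero, then |I| ≤ k and T = {v_i : i ∈ I} is a transversal of H. -/
import Mathlib


open Finset

/-- Regular-representation action of the idem-Clifford blade `ε_J` (product of the
idempotent generators `ε_j`, `j ∈ J`, satisfying `ε_j ^ 2 = ε_j`) on the coefficient
space, acting in the first coordinate. -/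
noncomputable def epsBladeL (α γ : Type*) [DecidableEq α] (J : Finset α) :
    Module.End ℝ ((Finset α × γ) → ℝ) where
  toFun c := fun p => ∑ T ∈ p.1.powerset.filter (fun T => T ∪ J = p.1), c (T, p.2)
  map_add' x y := by
    funext p
    simp [Finset.sum_add_distrib]
  map_smul' r x := by
    funext p
    simp [Finset.mul_sum]

/-- Regular-representation action of the idem-Clifford blade `x_I` (product of the
idempotent generators `x_i`, `i ∈ I`, satisfying `x_i ^ 2 = x_i`) on the coefficient
space, acting in the second coordinate. -/
noncomputable def epsBladeR (γ β : Type*) [DecidableEq β] (I : Finset β) :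
    Module.End ℝ ((γ × Finset β) → ℝ) where
  toFun c := fun p => ∑ T ∈ p.2.powerset.filter (fun T => T ∪ I = p.2), c (p.1, T)
  map_add' x y := by
    funext p
    simp [Finset.sum_add_distrib]
  map_smul' r x := by
    funext p
    simp [Finset.mul_sum]

/-- The idem-Clifford transversal representation
`σ = Σ_i (∏_{j : v_i ∈ e_j} ε_j) ⊗ x_i ∈ 𝔦_m ⊗ 𝔦_n` of the hypergraph with
hyperedges `E : Fin m → Finset (Fin n)`. -/
noncomputable def sigmaRep {n m : ℕ} (E : Fin m → Finset (Fin n)) :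
    Module.End ℝ ((Finset (Fin m) × Finset (Fin n)) → ℝ) :=
  ∑ i : Fin n,
    epsBladeL (Fin m) (Finset (Fin n)) (Finset.univ.filter (fun j => i ∈ E j)) *
      epsBladeR (Finset (Fin m)) (Fin n) {i}

/-- The coefficient vector of `1 ∈ 𝔦_m ⊗ 𝔦_n`: the indicator of the empty blade.
Applying (the multiplication operator of) `u` to it and evaluating at `(J, I)` reads off
the coefficient `u_{(J,I)}` of the blade `ε_J ⊗ x_I` in the canonical expansion of `u`. -/
noncomputable def delta0 (n m : ℕ) : (Finset (Fin m) × Finset (Fin n)) → ℝ :=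
  fun p => if p = ((∅ : Finset (Fin m)), (∅ : Finset (Fin n))) then 1 else 0


lemma sigma_pow_support {n m : ℕ} (E : Fin m → Finset (Fin n)) :
    ∀ k (J : Finset (Fin m)) (S : Finset (Fin n)),
      ((sigmaRep E) ^ k) (delta0 n m) (J, S) ≠ 0 →
      S.card ≤ k ∧ J = S.biUnion (fun i => Finset.univ.filter (fun j => i ∈ E j)) := by
  intro k
  induction k with
  | zero =>
    intro J S h
    rw [pow_zero, Module.End.one_apply] at h
    unfold delta0 at h
    split_ifs at h with hp
    · obtain ⟨h1, h2⟩ := Prod.mk.injEq .. ▸ hp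
      subst h1; subst h2
      simp
    · exact absurd rfl h
  | succ k ih =>
    intro J S h
    rw [pow_succ', Module.End.mul_apply] at h
    set c := ((sigmaRep E) ^ k) (delta0 n m) with hc
    unfold sigmaRep at h
    rw [LinearMap.sum_apply] at h
    simp only [Finset.sum_apply] at h
    obtain ⟨i, -, hi⟩ := Finset.exists_ne_zero_of_sum_ne_zero h
    rw [Module.End.mul_apply] at hi
    have hi' : (epsBladeL (Fin m) (Finset (Fin n))
        (Finset.univ.filter (fun j => i ∈ E j)))
        ((epsBladeR (Finset (Fin m)) (Fin n) {i}) c) (J, S) ≠ 0 := hi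
    unfold epsBladeL at hi'
    simp only [LinearMap.coe_mk, AddHom.coe_mk] at hi'
    obtain ⟨T, hT, hTne⟩ := Finset.exists_ne_zero_of_sum_ne_zero hi'
    unfold epsBladeR at hTne
    simp only [LinearMap.coe_mk, AddHom.coe_mk] at hTne
    obtain ⟨U, hU, hUne⟩ := Finset.exists_ne_zero_of_sum_ne_zero hTne
    rw [Finset.mem_filter] at hT hU
    obtain ⟨hcard, hbi⟩ := ih T U hUne
    constructor
    · have : S = U ∪ {i} := hU.2.symm
      rw [this]
      calc (U ∪ {i}).card ≤ U.card + ({i} : Finset (Fin n)).card := Finset.card_union_le _ _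
        _ ≤ k + 1 := by simpa using Nat.add_le_add_right hcard 1
    · have hS : S = U ∪ {i} := hU.2.symm
      have hJ : J = T ∪ Finset.univ.filter (fun j => i ∈ E j) := hT.2.symm
      rw [hS, hJ, hbi]
      ext j
      simp [Finset.mem_biUnion, Finset.mem_union, or_comm]

/-- Let `H` be a hypergraph with `n` vertices and `m` nonempty
hyperedges and no isolated vertices, and `σ ∈ 𝔦_m ⊗ 𝔦_n` its idem-Clifford transversal
representation.  For every `k ≥ 1` and `I ⊆ {1,…,n}`: if the coefficient of the blade
`ε_{{1,…,m}} ⊗ x_I` in the canonical expansion of `σ^k` is nonzero, then `|I| ≤ k` and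
`T = {v_i : i ∈ I}` is a transversal of `H`. -/
theorem transversal_representation_necessary {n m : ℕ} (E : Fin m → Finset (Fin n))
    (hE : ∀ j, (E j).Nonempty) (hiso : ∀ i : Fin n, ∃ j, i ∈ E j)
    (k : ℕ) (hk : 1 ≤ k) (I : Finset (Fin n))
    (h : ((sigmaRep E) ^ k) (delta0 n m) ((Finset.univ : Finset (Fin m)), I) ≠ 0) :
    I.card ≤ k ∧ ∀ j : Fin m, ∃ i ∈ I, i ∈ E j := by
  obtain ⟨h1, h2⟩ := sigma_pow_support E k Finset.univ I h
  refine ⟨h1, fun j => ?_⟩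
  have hj : j ∈ I.biUnion (fun i => Finset.univ.filter (fun j => i ∈ E j)) := by
    rw [← h2]; exact Finset.mem_univ j
  obtain ⟨i, hiI, hij⟩ := Finset.mem_biUnion.mp hj
  exact ⟨i, hiI, (Finset.mem_filter.mp hij).2⟩
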